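/- Let α be a real number such that α/π is not of the form n/2^k for any integer n and natural number k (so that 2^j·α is never an integer multiple of π, and the sequence Q_j is well defined for all j). Then the sequence (cot(2^j·α))_{j ≥ 0} is eventually periodic — i.e. there exist L ≥ 0 and P ≥ 1 with cot(2^{j+P}·α) = cot(2^j·α) for all j ≥ L — if and only if α/π is a rational number. -/

import Mathlib

/-!
Up to multiples of `π`, doubling `α` is the doubling map `x ↦ 2x mod 1` on `α / π`, and
`cot` is injective modulo `π` away from its poles. An equality `cot (2^(L+P) α) = cot (2^L α)`
therefore gives `(2^(L+P) - 2^L) α ∈ πℤ`, so `α / π` is rational. Conversely, if `α / π = a / d`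
then the powers of `2` modulo `d` are eventually periodic, so `2^(m+P) α - 2^m α ∈ πℤ` for all
large `m`, and `cot` is `π`-periodic.
-/

open Real

theorem Real.cot_periodic : Function.Periodic cot π := fun x => by
  rw [cot_eq_cos_div_sin, cot_eq_cos_div_sin, sin_add_pi, cos_add_pi, neg_div_neg_eq]

theorem Real.exists_sub_eq_int_mul_pi_of_cot_eq {a b : ℝ} (ha : sin a ≠ 0) (hb : sin b ≠ 0)
    (h : cot a = cot b) : ∃ n : ℤ, a - b = n * π := by
  rw [cot_eq_cos_div_sin, cot_eq_cos_div_sin, div_eq_div_iff ha hb] at h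
  have hsin : sin (a - b) = 0 := by rw [sin_sub]; linarith
  obtain ⟨n, hn⟩ := sin_eq_zero_iff.1 hsin
  exact ⟨n, hn.symm⟩

theorem Real.sin_two_pow_mul_ne_zero {α : ℝ} {j : ℕ} (hα : ∀ n : ℤ, α / π ≠ n / 2 ^ j) :
    sin (2 ^ j * α) ≠ 0 := by
  intro h
  obtain ⟨n, hn⟩ := sin_eq_zero_iff.1 h
  apply hα n
  field_simp [pi_ne_zero]
  linarith

theorem exists_rat_div_pi_eq_of_mul_eq_int_mul_pi {α : ℝ} {c : ℚ} (hc : c ≠ 0) {n : ℤ}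
    (h : c * α = n * π) : ∃ q : ℚ, α / π = q :=
  ⟨n / c, by
    have hc' : (c : ℝ) ≠ 0 := by exact_mod_cast hc
    push_cast
    rw [div_eq_div_iff pi_ne_zero hc']
    linarith⟩

theorem Monoid.exists_pow_add_eq_pow_of_finite {M : Type*} [Monoid M] [Finite M] (x : M) :
    ∃ L P : ℕ, 0 < P ∧ ∀ m, L ≤ m → x ^ (m + P) = x ^ m := by
  obtain ⟨i, j, hij, hpow⟩ := Finite.exists_ne_map_eq_of_infinite (x ^ · : ℕ → M)
  wlog hlt : i < j generalizing i j
  · exact this j i hij.symm hpow.symm (by omega)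
  refine ⟨i, j - i, by omega, fun m hm => ?_⟩
  have hj : m + (j - i) = (m - i) + j := by omega
  have hi : m = (m - i) + i := by omega
  rw [hj, pow_add, ← hpow, ← pow_add, ← hi]

theorem Rat.exists_pow_add_mul_sub_pow_mul_eq_int (b : ℤ) (q : ℚ) :
    ∃ L P : ℕ, 0 < P ∧ ∀ m, L ≤ m → ∃ k : ℤ, ((b : ℚ) ^ (m + P) - b ^ m) * q = k := by
  have : NeZero q.den := ⟨q.den_nz⟩
  obtain ⟨L, P, hP, hper⟩ := Monoid.exists_pow_add_eq_pow_of_finite (b : ZMod q.den)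
  refine ⟨L, P, hP, fun m hm => ?_⟩
  obtain ⟨k, hk⟩ : (q.den : ℤ) ∣ b ^ (m + P) - b ^ m := by
    rw [← ZMod.intCast_zmod_eq_zero_iff_dvd]
    push_cast
    rw [hper m hm, sub_self]
  refine ⟨k * q.num, ?_⟩
  have hk' : ((b : ℚ) ^ (m + P) - b ^ m) = q.den * k := by exact_mod_cast hk
  rw [hk']
  push_cast
  rw [← Rat.mul_den_eq_num q]
  ring

theorem cot_doubling_eventually_periodic_iff (α : ℝ)
    (hα : ∀ (n : ℤ) (k : ℕ), α / π ≠ (n : ℝ) / 2 ^ k) :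
    (∃ L : ℕ, ∃ P : ℕ, 1 ≤ P ∧
        ∀ j : ℕ, L ≤ j → Real.cot ((2 : ℝ) ^ (j + P) * α) = Real.cot ((2 : ℝ) ^ j * α)) ↔
      ∃ q : ℚ, α / π = (q : ℝ) := by
  constructor
  · rintro ⟨L, P, hP, hcot⟩
    obtain ⟨n, hn⟩ := exists_sub_eq_int_mul_pi_of_cot_eq (sin_two_pow_mul_ne_zero (hα · _))
      (sin_two_pow_mul_ne_zero (hα · _)) (hcot L le_rfl)
    have hc : (2 : ℚ) ^ (L + P) - 2 ^ L ≠ 0 :=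
      sub_ne_zero.2 (pow_lt_pow_right₀ one_lt_two (by omega : L < L + P)).ne'
    exact exists_rat_div_pi_eq_of_mul_eq_int_mul_pi hc (by push_cast; linarith)
  · rintro ⟨q, hq⟩
    obtain ⟨L, P, hP, hint⟩ := Rat.exists_pow_add_mul_sub_pow_mul_eq_int 2 q
    refine ⟨L, P, hP, fun m hm => ?_⟩
    obtain ⟨k, hk⟩ := hint m hm
    have hshift : (2 : ℝ) ^ (m + P) * α = 2 ^ m * α + k * π := by
      rw [div_eq_iff pi_ne_zero] at hq
      have hk' : ((2 : ℝ) ^ (m + P) - 2 ^ m) * q = k := by exact_mod_cast hk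
      rw [hq, ← hk']
      ring
    rw [hshift, cot_periodic.int_mul k]
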